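/- The graph F (the domino plus a pendant vertex attached to a degree-3 vertex of the domino) has readability exactly 3. -/
import Mathlib
set_option maxHeartbeats 1000000


/-- `OvAt s t k` : `s` overlaps `t` by `k`, i.e. `k` is positive, at most both lengths,
and the length-`k` suffix of `s` equals the length-`k` prefix of `t`. -/
def OvAt {α : Type} (s t : List α) (k : ℕ) : Prop :=
  0 < k ∧ k ≤ s.length ∧ k ≤ t.length ∧ s.drop (s.length - k) = t.take k

/-- `s` overlaps `t` (by some positive length). -/
def Overlaps {α : Type} (s t : List α) : Prop := ∃ k, OvAt s t k

/-- the minimum positive overlap length of `s` over `t` (0 if none exists). -/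
noncomputable def ovMin {α : Type} (s t : List α) : ℕ := sInf {k | OvAt s t k}

/-- A bipartite graph, given as a relation `E` between the two parts `S` and `T`,
has an overlap labeling with all strings of length `k`. -/
def HasOLab {S T : Type} (E : S → T → Prop) (k : ℕ) : Prop :=
  ∃ (α : Type) (ℓS : S → List α) (ℓT : T → List α),
    (∀ u, (ℓS u).length = k) ∧ (∀ v, (ℓT v).length = k) ∧
    ∀ u v, E u v ↔ Overlaps (ℓS u) (ℓT v)

/-- The readability of a bipartite graph: minimum length of an overlap labeling. -/
noncomputable def readability {S T : Type} (E : S → T → Prop) : ℕ :=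
  sInf {k | HasOLab E k}

/-- The bipartite graph `F`: the 2×3 grid graph (domino) with vertices `(i,j)`,
`i < 2`, `j < 3`, together with a pendant vertex attached to the degree-3 vertex `(1,1)`.
Part `S` (even parity) is `{s0 = (0,0), s1 = (0,2), s2 = (1,1)}` and part `T` (odd parity)
is `{t0 = (0,1), t1 = (1,0), t2 = (1,2), t3 = pendant}`; the edges are those of the domino
`s0t0, s0t1, s1t0, s1t2, s2t0, s2t1, s2t2` together with the pendant edge `s2t3`. -/
def FAdj : Fin 3 → Fin 4 → Prop := fun s t =>
  (s = 0 ∧ (t = 0 ∨ t = 1)) ∨ (s = 1 ∧ (t = 0 ∨ t = 2)) ∨ s = 2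

instance {α : Type} [DecidableEq α] (s t : List α) (k : ℕ) : Decidable (OvAt s t k) := by
  unfold OvAt; infer_instance

instance (s : Fin 3) (t : Fin 4) : Decidable (FAdj s t) := by
  unfold FAdj; infer_instance

lemma overlaps3 {α : Type} (s t : List α) (hs : s.length = 3) :
    Overlaps s t ↔ OvAt s t 1 ∨ OvAt s t 2 ∨ OvAt s t 3 := by
  constructor
  · rintro ⟨k, hk⟩
    have h1 := hk.1
    have h2 := hk.2.1
    rw [hs] at h2
    interval_cases k <;> tauto
  · rintro (h | h | h) <;> exact ⟨_, h⟩

lemma overlaps_two {α : Type} (a b c d : α) :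
    Overlaps [a, b] [c, d] ↔ (b = c ∨ (a = c ∧ b = d)) := by
  constructor
  · rintro ⟨k, h1, h2, h3, h4⟩
    simp only [List.length_cons, List.length_nil] at h2 h4
    interval_cases k
    · left; simpa using h4
    · right; simpa using h4
  · rintro (h | ⟨h1, h2⟩)
    · exact ⟨1, by simp [OvAt, h]⟩
    · exact ⟨2, by simp [OvAt, h1, h2]⟩

lemma overlaps_one {α : Type} (a c : α) : Overlaps [a] [c] ↔ a = c := by
  constructor
  · rintro ⟨k, h1, h2, h3, h4⟩
    simp only [List.length_cons, List.length_nil] at h2 h4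
    interval_cases k
    simpa using h4
  · rintro h; exact ⟨1, by simp [OvAt, h]⟩

lemma hasOLab3 : HasOLab FAdj 3 := by
  refine ⟨ℕ, ![[0,0,0],[0,0,1],[1,2,0]], ![[0,0,1],[0,0,0],[1,2,0],[2,0,0]], ?_, ?_, ?_⟩
  · intro u; fin_cases u <;> rfl
  · intro v; fin_cases v <;> rfl
  · intro u v
    rw [overlaps3 _ _ (show ((![[0,0,0],[0,0,1],[1,2,0]] : Fin 3 → List ℕ) u).length = 3 by
      fin_cases u <;> rfl)]
    fin_cases u <;> fin_cases v <;> decide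

/-- The graph `F` has readability exactly 3. -/
theorem F_readability_eq_three : readability FAdj = 3 := by
  refine le_antisymm (Nat.sInf_le hasOLab3) (le_csInf ⟨3, hasOLab3⟩ ?_)
  rintro k ⟨α, lS, lT, hS, hT, hE⟩
  by_contra hlt
  push_neg at hlt
  interval_cases k
  · -- k = 0
    obtain ⟨m, hm1, hm2, -⟩ := (hE 0 0).mp (by decide)
    rw [hS 0] at hm2
    omega
  · -- k = 1
    obtain ⟨a0, e0⟩ := List.length_eq_one_iff.mp (hS 0)
    obtain ⟨a2, e2⟩ := List.length_eq_one_iff.mp (hS 2)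
    obtain ⟨c0, f0⟩ := List.length_eq_one_iff.mp (hT 0)
    obtain ⟨c3, f3⟩ := List.length_eq_one_iff.mp (hT 3)
    have h00 := (hE 0 0).mp (by decide)
    have h20 := (hE 2 0).mp (by decide)
    have h23 := (hE 2 3).mp (by decide)
    have h03 : ¬ Overlaps (lS 0) (lT 3) := fun h => (by decide : ¬ FAdj 0 3) ((hE 0 3).mpr h)
    rw [e0, f0, overlaps_one] at h00
    rw [e2, f0, overlaps_one] at h20
    rw [e2, f3, overlaps_one] at h23
    rw [e0, f3, overlaps_one] at h03
    exact h03 (by rw [h00, ← h20, h23])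
  · -- k = 2
    obtain ⟨a0, b0, e0⟩ := List.length_eq_two.mp (hS 0)
    obtain ⟨a1, b1, e1⟩ := List.length_eq_two.mp (hS 1)
    obtain ⟨a2, b2, e2⟩ := List.length_eq_two.mp (hS 2)
    obtain ⟨c0, d0, f0⟩ := List.length_eq_two.mp (hT 0)
    obtain ⟨c1, d1, f1⟩ := List.length_eq_two.mp (hT 1)
    obtain ⟨c2, d2, f2⟩ := List.length_eq_two.mp (hT 2)
    obtain ⟨c3, d3, f3⟩ := List.length_eq_two.mp (hT 3)
    have E00 := (hE 0 0).mp (by decide)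
    have E01 := (hE 0 1).mp (by decide)
    have E10 := (hE 1 0).mp (by decide)
    have E12 := (hE 1 2).mp (by decide)
    have E20 := (hE 2 0).mp (by decide)
    have E21 := (hE 2 1).mp (by decide)
    have E22 := (hE 2 2).mp (by decide)
    have E23 := (hE 2 3).mp (by decide)
    have N02 : ¬ Overlaps (lS 0) (lT 2) := fun h => (by decide : ¬ FAdj 0 2) ((hE 0 2).mpr h)
    have N03 : ¬ Overlaps (lS 0) (lT 3) := fun h => (by decide : ¬ FAdj 0 3) ((hE 0 3).mpr h)
    have N11 : ¬ Overlaps (lS 1) (lT 1) := fun h => (by decide : ¬ FAdj 1 1) ((hE 1 1).mpr h)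
    have N13 : ¬ Overlaps (lS 1) (lT 3) := fun h => (by decide : ¬ FAdj 1 3) ((hE 1 3).mpr h)
    rw [e0, f0, overlaps_two] at E00
    rw [e0, f1, overlaps_two] at E01
    rw [e1, f0, overlaps_two] at E10
    rw [e1, f2, overlaps_two] at E12
    rw [e2, f0, overlaps_two] at E20
    rw [e2, f1, overlaps_two] at E21
    rw [e2, f2, overlaps_two] at E22
    rw [e2, f3, overlaps_two] at E23
    rw [e0, f2, overlaps_two] at N02
    rw [e0, f3, overlaps_two] at N03
    rw [e1, f1, overlaps_two] at N11
    rw [e1, f3, overlaps_two] at N13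
    push_neg at N02 N03 N11 N13
    clear hE hS hT e0 e1 e2 f0 f1 f2 f3 hlt
    clear lS lT
    rcases E00 with h1 | ⟨h1, h1'⟩ <;>
      rcases E01 with h2 | ⟨h2, h2'⟩ <;>
      rcases E10 with h3 | ⟨h3, h3'⟩ <;>
      rcases E12 with h4 | ⟨h4, h4'⟩ <;>
      rcases E20 with h5 | ⟨h5, h5'⟩ <;>
      rcases E21 with h6 | ⟨h6, h6'⟩ <;>
      rcases E22 with h7 | ⟨h7, h7'⟩ <;>
      rcases E23 with h8 | ⟨h8, h8'⟩ <;>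
      simp_all
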